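/- Let L be a line arrangement of k distinct lines in the complex projective plane with k even, k ≥ 4, t_3(L) ≠ 0 and t_r(L) = 0 for all r > 3, and suppose at least one line of L contains more than one double point (point of multiplicity 2). Then the Levi graph G(L) contains an induced cycle of length 2i for every integer i with 3 ≤ i ≤ ⌊(k+11)/4⌋. -/

import Mathlib

open scoped LinearAlgebra.Projectivization
open Projectivization

/-- The complex projective plane. -/
abbrev ProjPoint := ℙ ℂ (Fin 3 → ℂ)

/-- A subset of the projective plane is a (projective) line if it is the zero locus of a
nonzero linear form. -/
def IsProjLine (L : Set ProjPoint) : Prop :=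
  ∃ f : (Fin 3 → ℂ) →ₗ[ℂ] ℂ, f ≠ 0 ∧ L = {p | p.submodule ≤ LinearMap.ker f}

/-- The line in the projective plane with equation `a*x + b*y + c*z = 0`. -/
def projLine (a b c : ℂ) : Set ProjPoint :=
  {p : ProjPoint | ∀ v ∈ p.submodule, a * v 0 + b * v 1 + c * v 2 = 0}

/-- An arrangement of `k` distinct lines in the complex projective plane. -/
structure LineArrangement (k : ℕ) where
  line : Fin k → Set ProjPoint
  isLine : ∀ i, IsProjLine (line i)
  inj : Function.Injective line

namespace LineArrangement

variable {k : ℕ} (A : LineArrangement k)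

/-- The multiplicity of a point: the number of lines of the arrangement passing through it. -/
noncomputable def mult (p : ProjPoint) : ℕ :=
  Set.ncard {i : Fin k | p ∈ A.line i}

/-- The singular points of the arrangement: points lying on at least two of the lines. -/
def sing : Set ProjPoint := {p | 2 ≤ A.mult p}

/-- `A.t r` is the number of points of multiplicity exactly `r`. -/
noncomputable def t (r : ℕ) : ℕ := Set.ncard {p | A.mult p = r}

/-- The Levi graph of a line arrangement: the bipartite graph on `Sing(L) ⊔ L` where a point is
adjacent to a line iff the point lies on the line. -/
def levi : SimpleGraph (↥A.sing ⊕ Fin k) where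
  Adj v w :=
    match v, w with
    | Sum.inl p, Sum.inr i => p.1 ∈ A.line i
    | Sum.inr i, Sum.inl p => p.1 ∈ A.line i
    | _, _ => False
  symm := by
    constructor
    rintro (p | i) (q | j) h <;> simp_all
  loopless := by
    constructor
    rintro (p | i) h <;> simp_all

end LineArrangement

/-- A simple graph has an induced cycle of length `n` if there is an induced subgraph
isomorphic to the cycle graph `C_n`, i.e. a graph embedding of `C_n`. -/
def HasInducedCycle {V : Type*} (G : SimpleGraph V) (n : ℕ) : Prop :=
  Nonempty (SimpleGraph.cycleGraph n ↪g G)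

/-! Let the line `i₀` carry the double points `p = i₀ ∩ m₁` and `q = i₀ ∩ m₂`. The lines
`m₂, i₀, m₁` form a triangle whose corners lie on no fourth line of it, i.e. an induced 6-cycle
of the Levi graph. Such a cycle of lines `ℓ 0, …, ℓ (N - 1)`, consecutive lines meeting in points
on no other line of the cycle, grows by a line inserted between `ℓ (N - 1)` and `ℓ 0`: the new
line has to avoid the `N` lines of the cycle and, as every point has multiplicity at most 3, one
more line through each of `3N - 8` meets of the cycle lines; the double points `q` and `p` need
no care. A new line therefore exists while `4N - 8 < k`, giving induced cycles of every length
`2N` with `3 ≤ N` and `4N ≤ k + 11`. -/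

open Module

lemma finrank_ker_eq_two {f : (Fin 3 → ℂ) →ₗ[ℂ] ℂ} (hf : f ≠ 0) :
    finrank ℂ (LinearMap.ker f) = 2 := by
  have := Module.Dual.finrank_ker_add_one_of_ne_zero hf
  simp only [finrank_fin_fun] at this
  omega

namespace IsProjLine

lemma inter_nonempty {L M : Set ProjPoint} (hL : IsProjLine L) (hM : IsProjLine M) :
    (L ∩ M).Nonempty := by
  obtain ⟨f, hf, rfl⟩ := hL
  obtain ⟨g, hg, rfl⟩ := hM
  have hsum := Submodule.finrank_sup_add_finrank_inf_eq (LinearMap.ker f) (LinearMap.ker g)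
  have hsup := Submodule.finrank_le (LinearMap.ker f ⊔ LinearMap.ker g)
  rw [finrank_ker_eq_two hf, finrank_ker_eq_two hg] at hsum
  rw [finrank_fin_fun] at hsup
  obtain ⟨v, hv, hv0⟩ := Submodule.exists_mem_ne_zero_of_ne_bot
    (Submodule.one_le_finrank_iff.mp (by omega) : LinearMap.ker f ⊓ LinearMap.ker g ≠ ⊥)
  exact ⟨mk ℂ v hv0, by simpa [Submodule.span_singleton_le_iff_mem] using hv⟩

lemma inter_subsingleton {L M : Set ProjPoint} (hL : IsProjLine L) (hM : IsProjLine M)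
    (hLM : L ≠ M) : (L ∩ M).Subsingleton := by
  intro p ⟨hpL, hpM⟩ q ⟨hqL, hqM⟩
  by_contra hpq
  obtain ⟨f, hf, rfl⟩ := hL
  obtain ⟨g, hg, rfl⟩ := hM
  refine hLM (congrArg (fun W => {p : ProjPoint | p.submodule ≤ W}) ?_)
  exact line_unique hpq _ _ (finrank_ker_eq_two hf) (finrank_ker_eq_two hg)
    ((Submodule.mem_projectivization_iff_submodule_le _ _).2 hpL)
    ((Submodule.mem_projectivization_iff_submodule_le _ _).2 hqL)
    ((Submodule.mem_projectivization_iff_submodule_le _ _).2 hpM)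
    ((Submodule.mem_projectivization_iff_submodule_le _ _).2 hqM)

end IsProjLine

lemma SimpleGraph.cycleGraph_adj_iff_val {N : ℕ} (hN : 2 ≤ N) {u v : Fin N} :
    (cycleGraph N).Adj u v ↔ (u.val + 1) % N = v.val ∨ (v.val + 1) % N = u.val := by
  obtain ⟨n, rfl⟩ : ∃ n, N = n + 2 := ⟨N - 2, by omega⟩
  simp only [cycleGraph_adj, sub_eq_iff_eq_add, Fin.ext_iff, Fin.val_add, Fin.val_one]
  rw [add_comm 1, add_comm 1]
  exact or_comm.trans (or_congr eq_comm eq_comm)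

lemma Nat.add_one_mod_eq_or {s N : ℕ} (hs : s < N) :
    (s + 1) % N = s + 1 ∨ s + 1 = N ∧ (s + 1) % N = 0 := by
  rcases (Nat.succ_le_of_lt hs).lt_or_eq with h | h
  · exact .inl (Nat.mod_eq_of_lt h)
  · exact .inr ⟨h, h ▸ Nat.mod_self _⟩

theorem hasInducedCycle_of_incidence {α β : Type*} (G : SimpleGraph (α ⊕ β))
    (hα : ∀ x y, ¬ G.Adj (.inl x) (.inl y)) (hβ : ∀ x y, ¬ G.Adj (.inr x) (.inr y))
    {N : ℕ} (hN : 3 ≤ N) (a : Fin N → α) (b : Fin N → β) (hb : Function.Injective b)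
    (hadj : ∀ s m, G.Adj (.inl (a s)) (.inr (b m)) ↔ m.val = s.val ∨ m.val = (s.val + 1) % N) :
    HasInducedCycle G (2 * N) := by
  have ha : Function.Injective a := by
    intro s t hst
    have hts := (hadj t s).1 (hst ▸ (hadj s s).2 (.inl rfl))
    have hst := (hadj s t).1 (hst ▸ (hadj t t).2 (.inl rfl))
    rcases Nat.add_one_mod_eq_or s.2 with h | h <;>
      rcases Nat.add_one_mod_eq_or t.2 with h' | h' <;> omega
  have hpar : ∀ x, x % (2 * N) % 2 = x % 2 := fun x => Nat.mod_mod_of_dvd x (dvd_mul_right 2 N)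
  let half (v : Fin (2 * N)) : Fin N := ⟨v.val / 2, by omega⟩
  have hhalf (v : Fin (2 * N)) : (half v).val = v.val / 2 := rfl
  let f : Fin (2 * N) → α ⊕ β := fun v =>
    if v.val % 2 = 0 then .inr (b (half v)) else .inl (a (half v))
  have hf_even {v : Fin (2 * N)} (h : v.val % 2 = 0) : f v = .inr (b (half v)) := if_pos h
  have hf_odd {v : Fin (2 * N)} (h : v.val % 2 = 1) : f v = .inl (a (half v)) := if_neg (by omega)
  have hcross {u v : Fin (2 * N)} (hu : u.val % 2 = 0) (hv : v.val % 2 = 1) :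
      G.Adj (f u) (f v) ↔ (SimpleGraph.cycleGraph (2 * N)).Adj u v := by
    rw [hf_even hu, hf_odd hv, G.adj_comm, hadj, SimpleGraph.cycleGraph_adj_iff_val (by omega),
      Nat.mod_eq_of_lt (by omega : u.val + 1 < 2 * N),
      show v.val + 1 = 2 * (v.val / 2 + 1) by omega, Nat.mul_mod_mul_left, hhalf, hhalf]
    omega
  refine ⟨⟨⟨f, fun u v huv => ?_⟩, fun {u v} => ?_⟩⟩
  · rcases Nat.mod_two_eq_zero_or_one u.val with hu | hu <;>
      rcases Nat.mod_two_eq_zero_or_one v.val with hv | hv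
    · rw [hf_even hu, hf_even hv, Sum.inr.injEq] at huv
      exact Fin.ext (by have := congrArg Fin.val (hb huv); rw [hhalf, hhalf] at this; omega)
    · rw [hf_even hu, hf_odd hv] at huv; cases huv
    · rw [hf_odd hu, hf_even hv] at huv; cases huv
    · rw [hf_odd hu, hf_odd hv, Sum.inl.injEq] at huv
      exact Fin.ext (by have := congrArg Fin.val (ha huv); rw [hhalf, hhalf] at this; omega)
  · change G.Adj (f u) (f v) ↔ _
    rcases Nat.mod_two_eq_zero_or_one u.val with hu | hu <;>
      rcases Nat.mod_two_eq_zero_or_one v.val with hv | hv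
    · rw [hf_even hu, hf_even hv, SimpleGraph.cycleGraph_adj_iff_val (by omega)]
      refine iff_of_false (hβ _ _) fun h => ?_
      rcases h with h | h <;> have := congrArg (· % 2) h <;> simp only [hpar] at this <;> omega
    · exact hcross hu hv
    · rw [G.adj_comm, (SimpleGraph.cycleGraph _).adj_comm]; exact hcross hv hu
    · rw [hf_odd hu, hf_odd hv, SimpleGraph.cycleGraph_adj_iff_val (by omega)]
      refine iff_of_false (hα _ _) fun h => ?_
      rcases h with h | h <;> have := congrArg (· % 2) h <;> simp only [hpar] at this <;> omega

namespace LineArrangement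

variable {k : ℕ} (A : LineArrangement k)

-- For `i = j` this is some point of the line `i`.
noncomputable def meet (i j : Fin k) : ProjPoint :=
  Classical.epsilon fun p => p ∈ A.line i ∧ p ∈ A.line j

lemma meet_comm (i j : Fin k) : A.meet i j = A.meet j i := by
  simp only [meet, and_comm]

lemma meet_mem (i j : Fin k) : A.meet i j ∈ A.line i ∧ A.meet i j ∈ A.line j :=
  Classical.epsilon_spec ((A.isLine i).inter_nonempty (A.isLine j))

lemma meet_mem_left (i j : Fin k) : A.meet i j ∈ A.line i := (A.meet_mem i j).1

lemma meet_mem_right (i j : Fin k) : A.meet i j ∈ A.line j := (A.meet_mem i j).2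

variable {A}

lemma eq_meet {i j : Fin k} (hij : i ≠ j) {p : ProjPoint} (hi : p ∈ A.line i)
    (hj : p ∈ A.line j) : p = A.meet i j :=
  (A.isLine i).inter_subsingleton (A.isLine j) (A.inj.ne hij) ⟨hi, hj⟩ (A.meet_mem i j)

lemma meet_mem_line_swap {i j m : Fin k} (him : i ≠ m) (h : A.meet i j ∈ A.line m) :
    A.meet i m ∈ A.line j := by
  rw [← eq_meet him (A.meet_mem_left i j) h]
  exact A.meet_mem_right i j

variable (A) in
open Classical in
noncomputable def thru (p : ProjPoint) : Finset (Fin k) := {i | p ∈ A.line i}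

lemma mem_thru {p : ProjPoint} {i : Fin k} : i ∈ A.thru p ↔ p ∈ A.line i := by
  simp [thru]

lemma card_thru (p : ProjPoint) : (A.thru p).card = A.mult p := by
  rw [mult, ← Set.ncard_coe_finset]
  congr 1
  ext i
  exact mem_thru

lemma pair_subset_thru {p : ProjPoint} {i j : Fin k} (hi : p ∈ A.line i) (hj : p ∈ A.line j) :
    {i, j} ⊆ A.thru p := by
  simp [Finset.insert_subset_iff, mem_thru, hi, hj]

lemma two_le_mult {p : ProjPoint} {i j : Fin k} (hij : i ≠ j) (hi : p ∈ A.line i)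
    (hj : p ∈ A.line j) : 2 ≤ A.mult p := by
  rw [← card_thru, ← Finset.card_pair hij]
  exact Finset.card_le_card (pair_subset_thru hi hj)

lemma meet_mem_sing {i j : Fin k} (hij : i ≠ j) : A.meet i j ∈ A.sing :=
  two_le_mult hij (A.meet_mem_left i j) (A.meet_mem_right i j)

lemma eq_or_eq_of_mult_eq_two {p : ProjPoint} (hp : A.mult p = 2) {i j m : Fin k} (hij : i ≠ j)
    (hi : p ∈ A.line i) (hj : p ∈ A.line j) (hm : p ∈ A.line m) : m = i ∨ m = j := by
  have hthru : {i, j} = A.thru p := Finset.eq_of_subset_of_card_le (pair_subset_thru hi hj)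
    (by rw [card_thru, hp, Finset.card_pair hij])
  simpa [← hthru] using mem_thru.2 hm

lemma exists_ne_mem_line {p : ProjPoint} (hp : 2 ≤ A.mult p) (i : Fin k) :
    ∃ j ≠ i, p ∈ A.line j := by
  obtain ⟨j, hj, hji⟩ := Finset.exists_mem_ne (s := A.thru p) (by rw [card_thru]; omega) i
  exact ⟨j, hji, mem_thru.1 hj⟩

lemma finite_setOf_mult_eq {r : ℕ} (hr : 2 ≤ r) : {p | A.mult p = r}.Finite := by
  refine (Set.finite_range fun ij : Fin k × Fin k => A.meet ij.1 ij.2).subset fun p hp => ?_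
  obtain ⟨i, hi, j, hj, hij⟩ := Finset.one_lt_card.1 (by rw [card_thru]; exact hr.trans_eq hp.symm)
  exact ⟨(i, j), (eq_meet hij (mem_thru.1 hi) (mem_thru.1 hj)).symm⟩

lemma mult_le_of_t_eq_zero {d : ℕ} (hd : 1 ≤ d) (ht : ∀ r, d < r → A.t r = 0) (p : ProjPoint) :
    A.mult p ≤ d := by
  by_contra! h
  have hempty := (Set.ncard_eq_zero (A.finite_setOf_mult_eq (by omega))).1 (ht _ h)
  exact hempty.subset (rfl : A.mult p = A.mult p)

lemma exists_line_avoiding (hr : ∀ r, 3 < r → A.t r = 0) (S : Finset (Fin k))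
    (Q : Finset ProjPoint)
    (hQ : ∀ y ∈ Q, ∃ i ∈ S, ∃ j ∈ S, i ≠ j ∧ y ∈ A.line i ∧ y ∈ A.line j)
    (hcard : S.card + Q.card < k) : ∃ c ∉ S, ∀ y ∈ Q, y ∉ A.line c := by
  classical
  -- multiplicities are at most 3, so a point on two lines of `S` lies on at most one more line
  have hT : (Q.biUnion fun y => A.thru y \ S).card ≤ Q.card := by
    refine (Finset.card_biUnion_le_card_mul Q _ 1 fun y hy => ?_).trans_eq (mul_one _)
    obtain ⟨i, hi, j, hj, hij, hyi, hyj⟩ := hQ y hy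
    have h2 : 2 ≤ (A.thru y ∩ S).card := by
      rw [← Finset.card_pair hij]
      exact Finset.card_le_card (Finset.subset_inter (pair_subset_thru hyi hyj)
        (Finset.insert_subset hi (Finset.singleton_subset_iff.2 hj)))
    have h3 := card_thru y ▸ A.mult_le_of_t_eq_zero (by norm_num) hr y
    have := Finset.card_sdiff_add_card_inter (A.thru y) S
    omega
  obtain ⟨c, -, hc⟩ := Finset.exists_mem_notMem_of_card_lt_card
    (s := S ∪ Q.biUnion fun y => A.thru y \ S) (t := Finset.univ)
    (by
      rw [Finset.card_univ, Fintype.card_fin]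
      exact (Finset.card_union_le _ _).trans_lt (by omega))
  rw [Finset.mem_union, not_or] at hc
  exact ⟨c, hc.1, fun y hy hyc =>
    hc.2 (Finset.mem_biUnion.2 ⟨y, hy, Finset.mem_sdiff.2 ⟨mem_thru.2 hyc, hc.1⟩⟩)⟩

variable (A) in
/-- A cycle of distinct lines whose consecutive meets lie on no other line of the cycle; these are
the induced `2N`-cycles of the Levi graph. -/
def IsLineCycle (N : ℕ) (ℓ : ℕ → Fin k) : Prop :=
  Set.InjOn ℓ (Set.Iio N) ∧
    ∀ s < N, ∀ m < N, A.meet (ℓ s) (ℓ ((s + 1) % N)) ∈ A.line (ℓ m) → m = s ∨ m = (s + 1) % N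

lemma IsLineCycle.hasInducedCycle {N : ℕ} {ℓ : ℕ → Fin k} (h : A.IsLineCycle N ℓ)
    (hN : 3 ≤ N) : HasInducedCycle A.levi (2 * N) := by
  have hne : ∀ s < N, ℓ s ≠ ℓ ((s + 1) % N) := fun s hs hℓ => by
    have := h.1 hs (Nat.mod_lt _ (by omega)) hℓ
    rcases Nat.add_one_mod_eq_or hs with h' | h' <;> omega
  refine hasInducedCycle_of_incidence A.levi (fun _ _ h => h) (fun _ _ h => h) hN
    (fun s => ⟨A.meet (ℓ s) (ℓ ((s + 1) % N)), meet_mem_sing (hne s s.2)⟩) (fun m => ℓ m)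
    (fun s t hst => Fin.ext (h.1 s.2 t.2 hst)) fun s m => ⟨h.2 s s.2 m m.2, ?_⟩
  rintro (hm | hm) <;> rw [hm]
  exacts [A.meet_mem_left _ _, A.meet_mem_right _ _]

lemma isLineCycle_three {ℓ : ℕ → Fin k} (h01 : ℓ 0 ≠ ℓ 1) (h02 : ℓ 0 ≠ ℓ 2) (h12 : ℓ 1 ≠ ℓ 2)
    (hnc : A.meet (ℓ 0) (ℓ 1) ∉ A.line (ℓ 2)) : A.IsLineCycle 3 ℓ := by
  refine ⟨fun s (hs : s < 3) t (ht : t < 3) hst => ?_, fun s hs m hm hmem => ?_⟩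
  · interval_cases s <;> interval_cases t <;> simp_all
  · interval_cases s <;> interval_cases m <;> simp only [Nat.reduceAdd, Nat.reduceMod] at hmem ⊢ <;>
      try simp
    · exact absurd hmem hnc
    · exact hnc (A.meet_comm (ℓ 0) (ℓ 1) ▸ meet_mem_line_swap h01.symm hmem)
    · exact hnc (meet_mem_line_swap h01 (A.meet_comm (ℓ 0) (ℓ 2) ▸ hmem))

lemma IsLineCycle.update {N : ℕ} {ℓ : ℕ → Fin k} (h : A.IsLineCycle N ℓ) (hN : 2 ≤ N)
    {c : Fin k} (hc : ∀ m < N, ℓ m ≠ c)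
    (hold : ∀ s, s + 1 < N → A.meet (ℓ s) (ℓ (s + 1)) ∉ A.line c)
    (hlast : ∀ m, m + 1 < N → A.meet (ℓ (N - 1)) (ℓ m) ∉ A.line c)
    (hfirst : ∀ m, 0 < m → m < N → A.meet (ℓ 0) (ℓ m) ∉ A.line c) :
    A.IsLineCycle (N + 1) (Function.update ℓ N c) := by
  have hℓ' : ∀ m < N, Function.update ℓ N c m = ℓ m := fun m hm =>
    Function.update_of_ne hm.ne _ _
  have hℓN : Function.update ℓ N c N = c := Function.update_self _ _ _
  refine ⟨fun s (hs : s < N + 1) t (ht : t < N + 1) hst => ?_, fun s hs m hm hmem => ?_⟩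
  · rcases (Nat.lt_succ_iff.1 hs).lt_or_eq with hs | rfl <;>
      rcases (Nat.lt_succ_iff.1 ht).lt_or_eq with ht | rfl
    · rw [hℓ' s hs, hℓ' t ht] at hst
      exact h.1 hs ht hst
    · exact absurd (by rwa [hℓ' s hs, hℓN] at hst) (hc s hs)
    · exact absurd (by rwa [hℓ' t ht, hℓN, eq_comm] at hst) (hc t ht)
    · rfl
  rcases (Nat.lt_succ_iff.1 hs).lt_or_eq with hs | rfl
  · rcases (Nat.succ_le_of_lt hs).lt_or_eq with hs1 | hs1
    · -- an old meet, `ℓ s ∩ ℓ (s + 1)`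
      rw [Nat.mod_eq_of_lt (by omega : s + 1 < N + 1)] at hmem ⊢
      rw [hℓ' s hs, hℓ' _ hs1] at hmem
      rcases (Nat.lt_succ_iff.1 hm).lt_or_eq with hm | rfl
      · rw [hℓ' m hm] at hmem
        simpa [Nat.mod_eq_of_lt hs1] using h.2 s hs m hm (by rwa [Nat.mod_eq_of_lt hs1])
      · exact absurd (hℓN ▸ hmem) (hold s hs1)
    · -- the new meet `ℓ (N - 1) ∩ c`
      obtain rfl : N = s + 1 := hs1.symm
      rw [Nat.mod_eq_of_lt (by omega : s + 1 < s + 1 + 1)] at hmem ⊢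
      rw [hℓ' s hs, hℓN] at hmem
      rcases (Nat.lt_succ_iff.1 hm).lt_or_eq with hm | rfl
      · by_contra hms
        rw [hℓ' m hm] at hmem
        refine hlast m (by omega) ?_
        rw [Nat.add_sub_cancel]
        exact meet_mem_line_swap (fun e => hms (.inl (h.1 hm hs e.symm))) hmem
      · exact .inr rfl
  · -- the new meet `c ∩ ℓ 0`
    rw [Nat.mod_self] at hmem ⊢
    rw [hℓN, hℓ' 0 (by omega)] at hmem
    rcases (Nat.lt_succ_iff.1 hm).lt_or_eq with hm | rfl
    · rcases Nat.eq_zero_or_pos m with rfl | hm0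
      · exact .inr rfl
      rw [hℓ' m hm, A.meet_comm] at hmem
      have hne : ℓ 0 ≠ ℓ m := fun e => hm0.ne (h.1 (Set.mem_Iio.2 (by omega)) hm e)
      exact absurd (meet_mem_line_swap hne hmem) (hfirst m hm0 hm)
    · exact .inl rfl

lemma exists_line_avoiding_meets (hr : ∀ r, 3 < r → A.t r = 0) {N : ℕ} {ℓ : ℕ → Fin k}
    (hℓ : Set.InjOn ℓ (Set.Iio N)) (P : Finset (ℕ × ℕ))
    (hP : ∀ x ∈ P, x.1 < N ∧ x.2 < N ∧ x.1 ≠ x.2) (hcard : N + P.card < k) :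
    ∃ c, (∀ m < N, ℓ m ≠ c) ∧ ∀ x ∈ P, A.meet (ℓ x.1) (ℓ x.2) ∉ A.line c := by
  classical
  obtain ⟨c, hcS, hcQ⟩ := A.exists_line_avoiding hr ((Finset.range N).image ℓ)
    (P.image fun x => A.meet (ℓ x.1) (ℓ x.2)) (by
      simp only [Finset.mem_image, Finset.mem_range]
      rintro _ ⟨x, hx, rfl⟩
      obtain ⟨h1, h2, h12⟩ := hP x hx
      exact ⟨_, ⟨_, h1, rfl⟩, _, ⟨_, h2, rfl⟩, fun e => h12 (hℓ h1 h2 e),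
        A.meet_mem_left _ _, A.meet_mem_right _ _⟩)
    (by
      have := (Finset.card_image_le (s := Finset.range N) (f := ℓ)).trans_eq (Finset.card_range N)
      have := Finset.card_image_le (s := P) (f := fun x => A.meet (ℓ x.1) (ℓ x.2))
      omega)
  exact ⟨c, fun m hm e => hcS (Finset.mem_image.2 ⟨m, Finset.mem_range.2 hm, e⟩),
    fun x hx => hcQ _ (Finset.mem_image_of_mem _ hx)⟩

lemma IsLineCycle.exists_update (hr : ∀ r, 3 < r → A.t r = 0) {N : ℕ} {ℓ : ℕ → Fin k}
    (h : A.IsLineCycle N ℓ) (hN : 3 ≤ N)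
    (hdouble : ∀ s < 2, A.mult (A.meet (ℓ s) (ℓ (s + 1))) = 2) (hk : 4 * N < k + 8) :
    ∃ c, A.IsLineCycle (N + 1) (Function.update ℓ N c) := by
  -- Besides the `N` lines of the cycle, `c` avoids the at most one further line through each
  -- of the `3N - 8` meets below; the two double points need no care.
  let P : Finset (ℕ × ℕ) := (Finset.Ico 2 (N - 1)).image (fun s => (s, s + 1)) ∪
    (Finset.range (N - 2)).image (fun m => (N - 1, m)) ∪
    (Finset.Ico 2 (N - 1)).image (fun m => (0, m))
  have hPcard : P.card ≤ 3 * N - 8 := by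
    refine (Finset.card_union_le _ _).trans
      ((Nat.add_le_add_right (Finset.card_union_le _ _) _).trans ?_)
    have := Finset.card_image_le (s := Finset.Ico 2 (N - 1)) (f := fun s => (s, s + 1))
    have := Finset.card_image_le (s := Finset.range (N - 2)) (f := fun m => (N - 1, m))
    have := Finset.card_image_le (s := Finset.Ico 2 (N - 1)) (f := fun m => (0, m))
    simp only [Nat.card_Ico, Finset.card_range] at *
    omega
  obtain ⟨c, hc, hcP⟩ := exists_line_avoiding_meets hr h.1 P (by
    simp only [P, Finset.mem_union, Finset.mem_image, Finset.mem_Ico, Finset.mem_range]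
    rintro _ ((⟨s, hs, rfl⟩ | ⟨m, hm, rfl⟩) | ⟨m, hm, rfl⟩) <;> dsimp only <;> omega) (by omega)
  have hmemP : ∀ a b, (a, b) ∈ P → A.meet (ℓ a) (ℓ b) ∉ A.line c := fun a b => hcP (a, b)
  simp only [P, Finset.mem_union, Finset.mem_image, Finset.mem_Ico, Finset.mem_range,
    Prod.mk.injEq] at hmemP
  have hold : ∀ s, s + 1 < N → A.meet (ℓ s) (ℓ (s + 1)) ∉ A.line c := by
    intro s hs hmem
    by_cases hs2 : s < 2
    · have hne : ℓ s ≠ ℓ (s + 1) := fun e => by simpa using h.1 (by omega : s < N) hs e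
      rcases eq_or_eq_of_mult_eq_two (hdouble s hs2) hne (A.meet_mem_left _ _)
        (A.meet_mem_right _ _) hmem with e | e
      exacts [hc s (by omega) e.symm, hc (s + 1) hs e.symm]
    · exact hmemP s (s + 1) (.inl (.inl ⟨s, by omega, rfl, rfl⟩)) hmem
  have hlast : ∀ m, m + 1 < N → A.meet (ℓ (N - 1)) (ℓ m) ∉ A.line c := by
    intro m hm
    by_cases hm2 : m + 2 < N
    · exact hmemP _ _ (.inl (.inr ⟨m, by omega, rfl, rfl⟩))
    · obtain rfl : m = N - 2 := by omega
      rw [A.meet_comm, show N - 1 = N - 2 + 1 by omega]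
      exact hold _ (by omega)
  have hfirst : ∀ m, 0 < m → m < N → A.meet (ℓ 0) (ℓ m) ∉ A.line c := by
    intro m hm0 hm
    rcases (show m = 1 ∨ m = N - 1 ∨ (2 ≤ m ∧ m < N - 1) by omega) with rfl | rfl | hm'
    · exact hold 0 (by omega)
    · rw [A.meet_comm]; exact hlast 0 (by omega)
    · exact hmemP _ _ (.inr ⟨m, hm', rfl, rfl⟩)
  exact ⟨c, h.update (by omega) hc hold hlast hfirst⟩

lemma IsLineCycle.exists_of_three (hr : ∀ r, 3 < r → A.t r = 0) {ℓ : ℕ → Fin k}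
    (h3 : A.IsLineCycle 3 ℓ) (hdouble : ∀ s < 2, A.mult (A.meet (ℓ s) (ℓ (s + 1))) = 2)
    {N : ℕ} (hN : 3 ≤ N) (hk : 4 * N < k + 12) : ∃ ℓ', A.IsLineCycle N ℓ' := by
  suffices ∃ ℓ', A.IsLineCycle N ℓ' ∧ ∀ s < 3, ℓ' s = ℓ s from this.imp fun _ => And.left
  induction N, hN using Nat.le_induction with
  | base => exact ⟨ℓ, h3, fun _ _ => rfl⟩
  | succ N hN ih =>
    obtain ⟨ℓ', h', hℓ'⟩ := ih (by omega)
    obtain ⟨c, hc⟩ := h'.exists_update hr hN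
      (fun s hs => by rw [hℓ' s (by omega), hℓ' (s + 1) (by omega)]; exact hdouble s hs)
      (by omega)
    exact ⟨_, hc, fun s hs => (Function.update_of_ne (by omega) _ _).trans (hℓ' s hs)⟩

lemma exists_isLineCycle_three {i₀ : Fin k} {p q : ProjPoint} (hpq : p ≠ q)
    (hp₀ : p ∈ A.line i₀) (hq₀ : q ∈ A.line i₀) (hp : A.mult p = 2) (hq : A.mult q = 2) :
    ∃ ℓ : ℕ → Fin k,
      A.IsLineCycle 3 ℓ ∧ ∀ s < 2, A.mult (A.meet (ℓ s) (ℓ (s + 1))) = 2 := by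
  obtain ⟨m₁, hm₁, hp₁⟩ := exists_ne_mem_line hp.ge i₀
  obtain ⟨m₂, hm₂, hq₂⟩ := exists_ne_mem_line hq.ge i₀
  have hq_eq : q = A.meet m₂ i₀ := eq_meet hm₂ hq₂ hq₀
  have hp_eq : p = A.meet i₀ m₁ := eq_meet hm₁.symm hp₀ hp₁
  have hm₁₂ : m₁ ≠ m₂ := fun e => hpq (by rw [hp_eq, hq_eq, ← e, A.meet_comm])
  let ℓ : ℕ → Fin k := fun | 0 => m₂ | 1 => i₀ | _ => m₁
  refine ⟨ℓ, isLineCycle_three hm₂ hm₁₂.symm hm₁.symm fun hmem => ?_, fun s hs => ?_⟩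
  · rcases eq_or_eq_of_mult_eq_two (hq_eq ▸ hq) hm₂ (A.meet_mem_left _ _)
      (A.meet_mem_right _ _) hmem with e | e
    exacts [hm₁₂ e, hm₁ e]
  · interval_cases s
    exacts [hq_eq ▸ hq, hp_eq ▸ hp]

end LineArrangement

theorem inducedCycles_t3_even_two_double_points_general (k : ℕ)
    (A : LineArrangement k)
    (hr : ∀ r : ℕ, 3 < r → A.t r = 0)
    (hdouble : ∃ i : Fin k, ∃ p q : ProjPoint, p ≠ q ∧ p ∈ A.line i ∧ q ∈ A.line i ∧
      A.mult p = 2 ∧ A.mult q = 2) :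
    ∀ i : ℕ, 3 ≤ i → i ≤ (k + 11) / 4 → HasInducedCycle A.levi (2 * i) := by
  intro i hi hik
  obtain ⟨i₀, p, q, hpq, hp₀, hq₀, hp, hq⟩ := hdouble
  obtain ⟨ℓ, htri, hdouble⟩ := LineArrangement.exists_isLineCycle_three hpq hp₀ hq₀ hp hq
  obtain ⟨ℓ', hℓ'⟩ := htri.exists_of_three hr hdouble hi (by omega)
  exact hℓ'.hasInducedCycle hi

/-- `k` even, `k ≥ 4`, `t_3 ≠ 0`, `t_r = 0` for `r > 3`, and some line contains
more than one double point: the Levi graph has an induced cycle of length `2i` for every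
`3 ≤ i ≤ ⌊(k+11)/4⌋`. -/
theorem inducedCycles_t3_even_two_double_points (k : ℕ) (hk : 4 ≤ k) (heven : Even k)
    (A : LineArrangement k)
    (ht3 : A.t 3 ≠ 0) (hr : ∀ r : ℕ, 3 < r → A.t r = 0)
    (hdouble : ∃ i : Fin k, ∃ p q : ProjPoint, p ≠ q ∧ p ∈ A.line i ∧ q ∈ A.line i ∧
      A.mult p = 2 ∧ A.mult q = 2) :
    ∀ i : ℕ, 3 ≤ i → i ≤ (k + 11) / 4 → HasInducedCycle A.levi (2 * i) :=
  inducedCycles_t3_even_two_double_points_general k A hr hdouble
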